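/- arXiv:0907.2267 — 3 statements merged into one kernel-verified Lean document; each statement's English description precedes it below -/
import Mathlib

section
/- Let A be an N×N Hermitian complex matrix, M an N×N Hermitian positive definite complex matrix, and let u_1,…,u_N ∈ ℂ^N be an M-orthonormal system of generalized eigenvectors with real eigenvalues in ascending order λ_1 ≤ λ_2 ≤ … ≤ λ_N, i.e. A u_j = λ_j M u_j and u_i^* M u_j = δ_{ij}. Fix 1 ≤ m < N and λℓ, λu ∈ ℝ. Let Φ_ℓ be the N×m matrix with columns u_1,…,u_m and Φ_u the N×(N−m) matrix with columns u_{m+1},…,u_N. Then λ_m ≤ λℓ and λu ≤ λ_{m+1} hold if and only if Φ_ℓ^* (A − λℓ M) Φ_ℓ is negative semidefinite and Φ_u^* (A − λu M) Φ_u is positive semidefinite. -/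
/-!
Writing `Φ` for the matrix whose columns are `M`-orthonormal generalized eigenvectors
`v_j` with eigenvalues `μ_j`, the congruence `Φᴴ (A - c M) Φ` is the diagonal matrix with
entries `μ_j - c`. A diagonal matrix is positive (negative) semidefinite exactly when its
entries are, and by monotonicity of the eigenvalues the conditions on the lower block and on
the upper block reduce to `λ_m ≤ λℓ` and `λu ≤ λ_{m+1}`.
-/

open Matrix
open scoped ComplexOrder

/-- A matrix `Y` is negative semidefinite if it is Hermitian and `xᴴ Y x ≤ 0` for all `x`. -/
def Matrix.NegSemidef' {m : ℕ} (Y : Matrix (Fin m) (Fin m) ℂ) : Prop :=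
  Y.IsHermitian ∧ ∀ x : Fin m → ℂ, dotProduct (star x) (Y *ᵥ x) ≤ 0

namespace Matrix

theorem negSemidef'_iff_neg_posSemidef {m : ℕ} (Y : Matrix (Fin m) (Fin m) ℂ) :
    Y.NegSemidef' ↔ (-Y).PosSemidef := by
  simp only [NegSemidef', posSemidef_iff_dotProduct_mulVec, isHermitian_neg_iff, neg_mulVec,
    dotProduct_neg, neg_nonneg]

theorem negSemidef'_diagonal_iff {m : ℕ} (d : Fin m → ℂ) :
    (diagonal d).NegSemidef' ↔ ∀ i, d i ≤ 0 := by
  rw [negSemidef'_iff_neg_posSemidef, diagonal_neg, posSemidef_diagonal_iff]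
  simp only [neg_nonneg]

theorem conjTranspose_mul_mul_ofCols_apply {n ι R : Type*} [Fintype n] [CommRing R] [StarRing R]
    (B : Matrix n n R) (v : ι → n → R) (i j : ι) :
    ((of fun a j => v j a)ᴴ * B * of fun a j => v j a) i j = star (v i) ⬝ᵥ (B *ᵥ v j) := by
  simp only [mul_apply, mulVec, dotProduct, conjTranspose_apply, of_apply, Pi.star_apply,
    Finset.sum_mul, Finset.mul_sum, mul_assoc]
  exact Finset.sum_comm

theorem conjTranspose_mul_sub_smul_mul_eq_diagonal {n ι R : Type*} [Fintype n] [DecidableEq ι]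
    [CommRing R] [StarRing R] {A M : Matrix n n R} {v : ι → n → R} {μ : ι → R}
    (heig : ∀ j, A *ᵥ v j = μ j • M *ᵥ v j)
    (horth : ∀ i j, star (v i) ⬝ᵥ (M *ᵥ v j) = if i = j then 1 else 0) (c : R) :
    (of fun a j => v j a)ᴴ * (A - c • M) * (of fun a j => v j a) = diagonal fun j => μ j - c := by
  ext i j
  rw [conjTranspose_mul_mul_ofCols_apply, sub_mulVec, heig, smul_mulVec, ← sub_smul,
    dotProduct_smul, horth, diagonal_apply]
  split_ifs <;> simp_all

end Matrix

theorem Monotone.forall_castLE_le_iff {α : Type*} [Preorder α] {N m : ℕ} {f : Fin N → α}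
    (hf : Monotone f) (hmN : m ≤ N) (hm : 1 ≤ m) (c : α) :
    (∀ j : Fin m, f (Fin.castLE hmN j) ≤ c) ↔ f ⟨m - 1, by omega⟩ ≤ c :=
  ⟨fun h => h ⟨m - 1, by omega⟩, fun h j => (hf (Fin.mk_le_mk.mpr (by omega))).trans h⟩

theorem Monotone.forall_le_addLeft_iff {α : Type*} [Preorder α] {N m k : ℕ} {f : Fin N → α}
    (hf : Monotone f) (hmk : m + k ≤ N) (hk : 1 ≤ k) (c : α) :
    (∀ j : Fin k, c ≤ f ⟨m + j, by omega⟩) ↔ c ≤ f ⟨m, by omega⟩ :=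
  ⟨fun h => h ⟨0, hk⟩, fun h j => h.trans (hf (Fin.mk_le_mk.mpr (by omega)))⟩

theorem stmt_4 {N m : ℕ} (hm1 : 1 ≤ m) (hmN : m < N)
    (A M : Matrix (Fin N) (Fin N) ℂ)
    (lam : Fin N → ℝ) (hmono : Monotone lam)
    (u : Fin N → Fin N → ℂ)
    (heig : ∀ j : Fin N, A *ᵥ u j = (lam j : ℂ) • (M *ᵥ u j))
    (horth : ∀ i j : Fin N,
      dotProduct (star (u i)) (M *ᵥ u j) = if i = j then 1 else 0)
    (lamℓ lamu : ℝ)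
    (Φℓ : Matrix (Fin N) (Fin m) ℂ)
    (hΦℓ : Φℓ = Matrix.of fun n (j : Fin m) => u (Fin.castLE hmN.le j) n)
    (Φu : Matrix (Fin N) (Fin (N - m)) ℂ)
    (hΦu : Φu = Matrix.of fun n (j : Fin (N - m)) =>
      u ⟨m + (j : ℕ), by omega⟩ n) :
    (lam ⟨m - 1, by omega⟩ ≤ lamℓ ∧ lamu ≤ lam ⟨m, hmN⟩) ↔
      ((Φℓᴴ * (A - (lamℓ : ℂ) • M) * Φℓ).NegSemidef' ∧
       (Φuᴴ * (A - (lamu : ℂ) • M) * Φu).PosSemidef) := by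
  have horth_comp {k : ℕ} {f : Fin k → Fin N} (hf : f.Injective) (i j : Fin k) :
      star (u (f i)) ⬝ᵥ (M *ᵥ u (f j)) = if i = j then 1 else 0 := by
    simp only [horth, hf.eq_iff]
  rw [hΦℓ, hΦu,
    conjTranspose_mul_sub_smul_mul_eq_diagonal (fun _ => heig _)
      (horth_comp (Fin.castLE_injective hmN.le)),
    conjTranspose_mul_sub_smul_mul_eq_diagonal (fun _ => heig _)
      (horth_comp fun a b hab => Fin.ext (by simpa using congrArg Fin.val hab)),
    negSemidef'_diagonal_iff, posSemidef_diagonal_iff]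
  simp only [sub_nonpos, sub_nonneg, Complex.real_le_real]
  rw [hmono.forall_castLE_le_iff hmN.le hm1,
    hmono.forall_le_addLeft_iff (k := N - m) (by omega) (by omega)]
end

section
/- Let E and F be real vector spaces, K_1 ⊆ F and K_2 ⊆ E convex cones, A : E → F a linear map, b ∈ F, and c, d : E → ℝ linear functionals. If w ∈ K_2 and θ > 0 satisfy θ • b − A(w) ∈ K_1 and d(w) = 1, then setting x := θ⁻¹ • w, one has x ∈ K_2, b − A(x) ∈ K_1, d(x) = θ⁻¹ > 0, and c(x)/d(x) = c(w). -/
/-! Dividing a feasible point `(w, θ)` of the homogenized problem by `θ > 0` lands in the cones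
because they are closed under positive scaling, and the objective `c / d` of the fractional
problem is invariant under nonzero scaling, so it equals `c w / d w = c w`. -/

section CharnesCooper

variable {𝕜 E F : Type*} [Field 𝕜] [AddCommGroup E] [Module 𝕜 E] [AddCommGroup F] [Module 𝕜 F]

theorem LinearMap.div_map_smul {f g : E →ₗ[𝕜] 𝕜} {t : 𝕜} (ht : t ≠ 0) (w : E) :
    f (t • w) / g (t • w) = f w / g w := by
  simp only [map_smul, smul_eq_mul, mul_div_mul_left _ _ ht]

theorem ConvexCone.sub_map_inv_smul_mem [LinearOrder 𝕜] [IsStrictOrderedRing 𝕜]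
    {K : ConvexCone 𝕜 F} {A : E →ₗ[𝕜] F} {b : F} {w : E} {θ : 𝕜} (hθ : 0 < θ) (h : θ • b - A w ∈ K) : b - A (θ⁻¹ • w) ∈ K := by
  have hscaled : b - A (θ⁻¹ • w) = θ⁻¹ • (θ • b - A w) := by
    rw [smul_sub, smul_smul, inv_mul_cancel₀ hθ.ne', one_smul, map_smul]
  rw [hscaled]
  exact K.smul_mem (inv_pos.mpr hθ) h

end CharnesCooper

theorem stmt_6 {E F : Type*} [AddCommGroup E] [Module ℝ E] [AddCommGroup F] [Module ℝ F]
    (K₁ : ConvexCone ℝ F) (K₂ : ConvexCone ℝ E)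
    (A : E →ₗ[ℝ] F) (b : F) (c d : E →ₗ[ℝ] ℝ)
    (w : E) (θ : ℝ) (hw : w ∈ K₂) (hθ : 0 < θ)
    (hfeas : θ • b - A w ∈ K₁) (hdw : d w = 1) :
    θ⁻¹ • w ∈ K₂ ∧ b - A (θ⁻¹ • w) ∈ K₁ ∧
      d (θ⁻¹ • w) = θ⁻¹ ∧ 0 < θ⁻¹ ∧
      c (θ⁻¹ • w) / d (θ⁻¹ • w) = c w := by
  have hθinv : 0 < θ⁻¹ := inv_pos.mpr hθ
  refine ⟨K₂.smul_mem hθinv hw, K₁.sub_map_inv_smul_mem hθ hfeas, ?_, hθinv, ?_⟩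
  · rw [map_smul, hdw, smul_eq_mul, mul_one]
  · rw [LinearMap.div_map_smul hθinv.ne', hdw, div_one]
end

section
/- Let E and F be real vector spaces, K_1 ⊆ F and K_2 ⊆ E convex cones, A : E → F a linear map, b ∈ F, and c, d : E → ℝ linear functionals. Then the set of objective values of the fractional problem equals the set of objective values of its homogenization with θ > 0: { c(x)/d(x) : x ∈ K_2, b − A(x) ∈ K_1, d(x) > 0 } = { c(w) : ∃ θ > 0, w ∈ K_2, θ • b − A(w) ∈ K_1, d(w) = 1 }. -/
/-! The Charnes–Cooper substitution `w = x / d x`, `θ = 1 / d x` is inverted by `x = w / θ`.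
Both constraints are homogeneous under positive scaling of `(x, 1)`, and `c x / d x` is
scale-invariant, so the two problems reach the same objective values. -/

lemma ConvexCone.smul_sub_map_smul_mem_iff {𝕜 E F : Type*} [Field 𝕜] [LinearOrder 𝕜]
    [IsStrictOrderedRing 𝕜] [AddCommGroup E] [Module 𝕜 E] [AddCommGroup F] [Module 𝕜 F]
    (K : ConvexCone 𝕜 F) (A : E →ₗ[𝕜] F) {t : 𝕜} (ht : 0 < t) (b : F) (x : E) :
    t • b - A (t • x) ∈ K ↔ b - A x ∈ K := by
  rw [map_smul, ← smul_sub, K.smul_mem_iff ht]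

theorem stmt_7 {E F : Type*} [AddCommGroup E] [Module ℝ E] [AddCommGroup F] [Module ℝ F]
    (K₁ : ConvexCone ℝ F) (K₂ : ConvexCone ℝ E)
    (A : E →ₗ[ℝ] F) (b : F) (c d : E →ₗ[ℝ] ℝ) :
    {r : ℝ | ∃ x : E, x ∈ K₂ ∧ b - A x ∈ K₁ ∧ 0 < d x ∧ r = c x / d x} =
      {r : ℝ | ∃ w : E, ∃ θ : ℝ, 0 < θ ∧ w ∈ K₂ ∧ θ • b - A w ∈ K₁ ∧ d w = 1 ∧ r = c w} := by
  ext r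
  constructor
  · rintro ⟨x, hx, hb, hd, rfl⟩
    have ht : 0 < (d x)⁻¹ := inv_pos.2 hd
    refine ⟨(d x)⁻¹ • x, (d x)⁻¹, ht, (K₂.smul_mem_iff ht).2 hx,
      (K₁.smul_sub_map_smul_mem_iff A ht b x).2 hb, ?_, ?_⟩
    · rw [map_smul, smul_eq_mul, inv_mul_cancel₀ hd.ne']
    · rw [map_smul, smul_eq_mul, div_eq_inv_mul]
  · rintro ⟨w, θ, hθ, hw, hb, hd, rfl⟩
    obtain ⟨x, rfl⟩ : ∃ x, w = θ • x := ⟨θ⁻¹ • w, (smul_inv_smul₀ hθ.ne' w).symm⟩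
    rw [map_smul, smul_eq_mul] at hd
    have hdx : 0 < d x := pos_of_mul_pos_right (hd ▸ one_pos) hθ.le
    refine ⟨x, (K₂.smul_mem_iff hθ).1 hw, (K₁.smul_sub_map_smul_mem_iff A hθ b x).1 hb, hdx, ?_⟩
    rw [eq_div_iff hdx.ne', map_smul, smul_eq_mul, mul_right_comm, hd, one_mul]
end
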